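/- arXiv:1704.02474 — 5 statements merged into one kernel-verified Lean document; each statement's English description precedes it below -/
import Mathlib

section
/- Every finite-dimensional division algebra over ℝ is isomorphic to ℝ, ℂ, or ℍ (Frobenius's theorem). -/
/-!
Every element of a real algebraic division algebra satisfies a real quadratic equation, so every
non-real element has the form `r + s • u` with `u * u = -1`. For such a `u = i`, an element
commuting with `i` is again of this form with `u = ±i`, so the centralizer of `i` is `ℝ[i] ≅ ℂ`.
If `i` is not central, `d + i * d * i` anticommutes with `i` for a suitable `d`; its square is
real and negative, which rescales it to `j` with `j * j = -1` and `i * j = -(j * i)`. Right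
multiplication by `j` maps the elements anticommuting with `i` into the centralizer `ℝ[i]`, and
every `d` is half the sum of `d - i * d * i`, which commutes with `i`, and `d + i * d * i`, which
anticommutes with it; hence `i` and `j` generate `D` and `D ≅ ℍ`.
-/

open Polynomial

section Ring

variable {R : Type*} [Ring R]

theorem commute_mul_of_anticommute {a b c : R} (hb : a * b = -(b * a)) (hc : a * c = -(c * a)) :
    Commute a (b * c) := by
  rw [Commute, SemiconjBy, ← mul_assoc, hb, neg_mul, mul_assoc, hc, mul_neg, neg_neg, mul_assoc]

theorem commute_sub_mul_mul {i : R} (hi : i * i = -1) (d : R) : Commute i (d - i * d * i) := by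
  rw [Commute, SemiconjBy, mul_sub, sub_mul, ← mul_assoc, ← mul_assoc, hi, mul_assoc (i * d), hi]
  noncomm_ring

theorem mul_add_mul_mul_eq_neg {i : R} (hi : i * i = -1) (d : R) :
    i * (d + i * d * i) = -((d + i * d * i) * i) := by
  rw [mul_add, add_mul, ← mul_assoc, ← mul_assoc, hi, mul_assoc (i * d), hi]
  noncomm_ring

theorem eq_or_eq_neg_of_commute [NoZeroDivisors R] {i u : R} (hi : i * i = -1) (hu : u * u = -1)
    (h : Commute i u) : u = i ∨ u = -i := by
  have : (u - i) * (u + i) = 0 := by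
    rw [sub_mul, mul_add, mul_add, hu, hi, h.eq]; abel
  rcases mul_eq_zero.1 this with h | h
  · exact Or.inl (sub_eq_zero.1 h)
  · exact Or.inr (eq_neg_of_add_eq_zero_left h)

end Ring

section RealAlgebra

variable {A : Type*} [Ring A] [IsDomain A] [Algebra ℝ A]

theorem exists_mul_self_add_smul_add_algebraMap_eq_zero {x : A} (hx : IsIntegral ℝ x) :
    ∃ b c : ℝ, x * x + b • x + algebraMap ℝ A c = 0 := by
  -- Irreducible real polynomials have degree at most two; pad by a power of `X` to degree two.
  have hdeg := (minpoly.irreducible hx).natDegree_le_two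
  have hq : IsMonicOfDegree (minpoly ℝ x * X ^ (2 - (minpoly ℝ x).natDegree)) 2 := by
    convert (IsMonicOfDegree.mk rfl (minpoly.monic hx)).mul (isMonicOfDegree_X_pow ℝ _) using 1
    omega
  obtain ⟨b, c, hbc⟩ := isMonicOfDegree_two_iff.1 hq
  refine ⟨b, c, ?_⟩
  simpa [sq, Algebra.smul_def] using (congrArg (aeval x) hbc).symm

theorem exists_smul_mul_self_eq_neg_one {y : A} {a : ℝ} (hy : y * y = algebraMap ℝ A a)
    (hyr : y ∉ (⊥ : Subalgebra ℝ A)) : ∃ s : ℝ, s • y * (s • y) = -1 := by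
  have ha : a < 0 := by
    by_contra! ha
    obtain ⟨t, rfl⟩ : ∃ t, a = t * t := ⟨√a, (Real.mul_self_sqrt ha).symm⟩
    have : (y - algebraMap ℝ A t) * (y + algebraMap ℝ A t) = 0 := by
      rw [sub_mul, mul_add, mul_add, hy, ← Algebra.commutes t y, map_mul]; abel
    rcases mul_eq_zero.1 this with h | h
    · exact hyr (Algebra.mem_bot.2 ⟨t, (sub_eq_zero.1 h).symm⟩)
    · exact hyr (Algebra.mem_bot.2 ⟨-t, by rw [map_neg, eq_neg_of_add_eq_zero_left h]⟩)
  refine ⟨(√(-a))⁻¹, ?_⟩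
  rw [smul_mul_smul_comm, hy, Algebra.smul_def, ← map_mul, ← map_one (algebraMap ℝ A), ← map_neg]
  congr 1
  rw [← sq, inv_pow, Real.sq_sqrt (neg_nonneg.2 ha.le), inv_neg, neg_mul, inv_mul_cancel₀ ha.ne]

theorem exists_mul_self_eq_neg_one_mem_adjoin {x : A} (hx : IsIntegral ℝ x)
    (hxr : x ∉ (⊥ : Subalgebra ℝ A)) :
    ∃ u ∈ Algebra.adjoin ℝ {x}, u * u = -1 ∧ x ∈ Algebra.adjoin ℝ {u} := by
  obtain ⟨b, c, hbc⟩ := exists_mul_self_add_smul_add_algebraMap_eq_zero hx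
  set y := x + (b / 2) • (1 : A) with hy_def
  have hy : y * y = algebraMap ℝ A (b ^ 2 / 4 - c) := by
    rw [Algebra.algebraMap_eq_smul_one] at hbc ⊢
    simp only [hy_def, add_mul, mul_add, smul_mul_assoc, mul_smul_comm, one_mul, mul_one]
    linear_combination (norm := module) hbc
  have hyr : y ∉ (⊥ : Subalgebra ℝ A) := fun h =>
    hxr (by simpa [hy_def] using sub_mem h (Subalgebra.smul_mem ⊥ (one_mem _) (b / 2)))
  obtain ⟨s, hs⟩ := exists_smul_mul_self_eq_neg_one hy hyr
  have hs0 : s ≠ 0 := by rintro rfl; simp at hs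
  refine ⟨s • y, ?_, hs, ?_⟩
  · exact Subalgebra.smul_mem _ (add_mem (Algebra.self_mem_adjoin_singleton ℝ x)
      (Subalgebra.smul_mem _ (one_mem _) _)) _
  · have hy_mem : y ∈ Algebra.adjoin ℝ {s • y} := by
      simpa [smul_smul, inv_mul_cancel₀ hs0] using
        Subalgebra.smul_mem _ (Algebra.self_mem_adjoin_singleton ℝ (s • y)) s⁻¹
    simpa [hy_def] using sub_mem hy_mem (Subalgebra.smul_mem _ (one_mem _) (b / 2))

theorem mem_adjoin_singleton_of_commute [Algebra.IsIntegral ℝ A] {i y : A} (hi : i * i = -1)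
    (h : Commute i y) : y ∈ Algebra.adjoin ℝ {i} := by
  by_cases hy : y ∈ (⊥ : Subalgebra ℝ A)
  · exact (bot_le : ⊥ ≤ Algebra.adjoin ℝ {i}) hy
  obtain ⟨u, hu_mem, hu, hy_mem⟩ :=
    exists_mul_self_eq_neg_one_mem_adjoin (Algebra.IsIntegral.isIntegral y) hy
  refine Algebra.adjoin_singleton_le ?_ hy_mem
  rcases eq_or_eq_neg_of_commute hi hu
    (Algebra.commute_of_mem_adjoin_singleton_of_commute hu_mem h) with rfl | rfl
  · exact Algebra.self_mem_adjoin_singleton ℝ u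
  · exact neg_mem (Algebra.self_mem_adjoin_singleton ℝ i)

theorem exists_anticommute_of_not_commute [Algebra.IsIntegral ℝ A] {i d : A}
    (hi : i * i = -1) (hd : ¬Commute i d) : ∃ j : A, j * j = -1 ∧ i * j = -(j * i) := by
  set w := d + i * d * i
  have hiw : i * w = -(w * i) := mul_add_mul_mul_eq_neg hi d
  have hw : ¬Commute i w := by
    intro h
    refine hd (sub_eq_zero.1 ?_)
    have h2 : (2 : ℝ) • (i * w) = 0 := by
      rw [two_smul]; nth_rw 2 [hiw]; rw [← h.eq, add_neg_cancel]
    have h0 := (smul_eq_zero.1 h2).resolve_left two_ne_zero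
    rwa [mul_add, ← mul_assoc, ← mul_assoc, hi, neg_one_mul, neg_mul, ← sub_eq_add_neg] at h0
  -- Otherwise `w * w` generates a square root of `-1` that commutes with `i`, hence is `±i`,
  -- and commutes with `w`.
  have hww : w * w ∈ (⊥ : Subalgebra ℝ A) := by
    by_contra hww
    obtain ⟨u, hu_mem, hu, -⟩ :=
      exists_mul_self_eq_neg_one_mem_adjoin (Algebra.IsIntegral.isIntegral _) hww
    have hwu : Commute w u := Algebra.commute_of_mem_adjoin_singleton_of_commute hu_mem
      ((Commute.refl w).mul_right (Commute.refl w))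
    rcases eq_or_eq_neg_of_commute hi hu (Algebra.commute_of_mem_adjoin_singleton_of_commute
      hu_mem (commute_mul_of_anticommute hiw hiw)) with rfl | rfl
    · exact hw hwu.symm
    · exact hw (Commute.neg_right_iff.1 hwu).symm
  obtain ⟨a, ha⟩ := Algebra.mem_bot.1 hww
  have hwr : w ∉ (⊥ : Subalgebra ℝ A) := by
    rintro h
    obtain ⟨t, ht⟩ := Algebra.mem_bot.1 h
    exact hw (ht ▸ (Algebra.commutes t i).symm)
  obtain ⟨s, hs⟩ := exists_smul_mul_self_eq_neg_one ha.symm hwr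
  exact ⟨s • w, hs, by rw [mul_smul_comm, smul_mul_assoc, hiw, smul_neg]⟩

theorem adjoin_pair_eq_top_of_anticommute [Algebra.IsIntegral ℝ A] {i j : A} (hi : i * i = -1)
    (hj : j * j = -1) (hij : i * j = -(j * i)) : Algebra.adjoin ℝ {i, j} = ⊤ := by
  refine Algebra.eq_top_iff.2 fun d => ?_
  have hle : Algebra.adjoin ℝ {i} ≤ Algebra.adjoin ℝ {i, j} := Algebra.adjoin_mono (by simp)
  have hp := hle (mem_adjoin_singleton_of_commute hi (commute_sub_mul_mul hi d))
  have hqj := hle (mem_adjoin_singleton_of_commute hi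
    (commute_mul_of_anticommute (mul_add_mul_mul_eq_neg hi d) hij))
  have hq : d + i * d * i = -((d + i * d * i) * j * j) := by
    rw [mul_assoc _ j j, hj, mul_neg_one, neg_neg]
  have hd : d = (2 : ℝ)⁻¹ • ((d - i * d * i) + (d + i * d * i)) := by module
  rw [hd, hq]
  exact Subalgebra.smul_mem _ (add_mem hp (neg_mem (mul_mem hqj
    (Algebra.subset_adjoin (by simp))))) _

end RealAlgebra

theorem nonempty_algEquiv_of_adjoin_eq_top {R A B : Type*} [CommSemiring R] [Semiring A]
    [Nontrivial A] [DivisionRing B] [Algebra R A] [Algebra R B] (φ : B →ₐ[R] A) {s : Set A}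
    (hs : s ⊆ φ.range) (h : Algebra.adjoin R s = ⊤) : Nonempty (A ≃ₐ[R] B) :=
  ⟨(AlgEquiv.ofBijective φ ⟨φ.toRingHom.injective,
    (AlgHom.range_eq_top φ).1 (top_le_iff.1 (h ▸ Algebra.adjoin_le hs))⟩).symm⟩

theorem QuaternionAlgebra.Basis.pair_subset_range_liftHom {R A : Type*} [CommRing R] [Ring A]
    [Algebra R A] {c₁ c₂ c₃ : R} (q : QuaternionAlgebra.Basis A c₁ c₂ c₃) :
    ({q.i, q.j} : Set A) ⊆ (q.liftHom.range : Set A) :=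
  Set.insert_subset_iff.2 ⟨⟨⟨0, 1, 0, 0⟩, by simp [lift]⟩,
    Set.singleton_subset_iff.2 ⟨⟨0, 0, 1, 0⟩, by simp [lift]⟩⟩

/-- **Frobenius's theorem**: every finite-dimensional division algebra over `ℝ` is
isomorphic (as an `ℝ`-algebra) to `ℝ`, `ℂ`, or the Hamilton quaternions `ℍ`. -/
theorem frobenius_real_division_algebra (D : Type) [DivisionRing D] [Algebra ℝ D]
    [FiniteDimensional ℝ D] :
    Nonempty (D ≃ₐ[ℝ] ℝ) ∨ Nonempty (D ≃ₐ[ℝ] ℂ) ∨ Nonempty (D ≃ₐ[ℝ] Quaternion ℝ) := by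
  by_cases hreal : ∀ x : D, x ∈ (⊥ : Subalgebra ℝ D)
  · refine Or.inl (nonempty_algEquiv_of_adjoin_eq_top (Algebra.ofId ℝ D)
      (Set.empty_subset _) (Algebra.adjoin_empty ℝ D ▸ Algebra.eq_top_iff.2 hreal))
  obtain ⟨x, hx⟩ := not_forall.1 hreal
  obtain ⟨i, -, hi, -⟩ := exists_mul_self_eq_neg_one_mem_adjoin (Algebra.IsIntegral.isIntegral x) hx
  by_cases hcomm : ∀ d : D, Commute i d
  · refine Or.inr (Or.inl (nonempty_algEquiv_of_adjoin_eq_top (Complex.liftAux i hi)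
      (s := {i}) ?_ (Algebra.eq_top_iff.2 fun d => mem_adjoin_singleton_of_commute hi (hcomm d))))
    exact Set.singleton_subset_iff.2 ⟨Complex.I, Complex.liftAux_apply_I i hi⟩
  obtain ⟨d, hd⟩ := not_forall.1 hcomm
  obtain ⟨j, hj, hij⟩ := exists_anticommute_of_not_commute hi hd
  let B : QuaternionAlgebra.Basis D (-1 : ℝ) 0 (-1) :=
    { i := i, j := j, k := i * j
      i_mul_i := by simp [hi]
      j_mul_j := by simp [hj]
      i_mul_j := rfl
      j_mul_i := by simp [hij] }
  exact Or.inr (Or.inr (nonempty_algEquiv_of_adjoin_eq_top B.liftHom B.pair_subset_range_liftHom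
    (adjoin_pair_eq_top_of_anticommute hi hj hij)))
end

section
/- Every automorphism of a central simple algebra A over a field k is inner, i.e., given by conjugation by a unit of A (Skolem–Noether). -/
/-!
The action `(a ⊗ bᵒᵖ) • x = a * x * b` makes a central simple algebra `A` a simple
`A ⊗ Aᵐᵒᵖ`-module whose endomorphisms are scalars, so by Jacobson density
`A ⊗ Aᵐᵒᵖ → End_k A` is onto, hence an isomorphism since both sides have dimension `(dim A)²`.
Transporting `φ ⊗ 1` along it gives an automorphism of `End_k A`, which is conjugation by some
`T ∈ GL_k(A)` (the split case of the theorem). Then `T (a * x * b) = φ a * T x * b`, so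
`u = T 1` is a unit with `T x = u * x = φ x * u`.
-/

open TensorProduct MulOpposite

theorem IsSimpleModule.exists_forall_apply_eq_smul_of_end_scalar {k R V : Type*}
    [CommSemiring k] [Ring R] [AddCommGroup V] [Module k V] [Module R V] [SMulCommClass R k V]
    [Module.Finite k V] [IsSimpleModule R V]
    (h_end : ∀ f : Module.End R V, ∃ c : k, ∀ v, f v = c • v)
    (g : Module.End k V) : ∃ r : R, ∀ v, g v = r • v := by
  obtain ⟨s, hs⟩ := Module.Finite.fg_top (R := k) (M := V)
  let G : Module.End (Module.End R V) V :=
    { toFun := g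
      map_add' := g.map_add
      map_smul' := fun f v => by
        obtain ⟨c, hc⟩ := h_end f
        simp only [Module.End.smul_def, hc, map_smul, RingHom.id_apply] }
  obtain ⟨r, hr⟩ := jacobson_density G s
  exact ⟨r, LinearMap.congr_fun (LinearMap.ext_on hs (f := g)
    (g := DistribSMul.toLinearMap k V r) fun v hv => hr v hv)⟩

section Bimodule

variable (k A : Type*) [CommSemiring k] [Ring A] [Algebra k A]

attribute [local instance] instModuleTensorProductMop

theorem tmul_op_smul (a b x : A) : (a ⊗ₜ[k] op b) • x = a * x * b :=
  AlgHom.mulLeftRight_apply k A a (op b) x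

theorem isSimpleModule_tensorProduct_mop [IsSimpleRing A] :
    IsSimpleModule (A ⊗[k] Aᵐᵒᵖ) A := by
  suffices IsSimpleOrder (Submodule (A ⊗[k] Aᵐᵒᵖ) A) from ⟨⟩
  refine { eq_bot_or_eq_top := fun p => ?_ }
  let I : TwoSidedIdeal A := .mk' p p.zero_mem p.add_mem p.neg_mem
    (fun {a x} hx => by
      simpa only [tmul_op_smul, mul_one, SetLike.mem_coe] using p.smul_mem (a ⊗ₜ[k] op 1) hx)
    (fun {x b} hx => by
      simpa only [tmul_op_smul, one_mul, SetLike.mem_coe] using p.smul_mem (1 ⊗ₜ[k] op b) hx)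
  have hI : ∀ x, x ∈ I ↔ x ∈ p := TwoSidedIdeal.mem_mk' _ _ _ _ _ _
  rcases IsSimpleOrder.eq_bot_or_eq_top I with h | h
  · exact .inl <| (Submodule.eq_bot_iff p).2 fun x hx => by simpa [h] using (hI x).2 hx
  · exact .inr <| Submodule.eq_top_iff'.2 fun x => (hI x).1 (h ▸ TwoSidedIdeal.mem_top A)

theorem exists_forall_apply_eq_smul_of_tensorProduct_mop [Algebra.IsCentral k A]
    (f : Module.End (A ⊗[k] Aᵐᵒᵖ) A) : ∃ c : k, ∀ x, f x = c • x := by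
  have h_left x : f x = x * f 1 := by
    simpa only [tmul_op_smul, mul_one] using f.map_smul (x ⊗ₜ[k] op 1) 1
  have h_right x : f x = f 1 * x := by
    simpa only [tmul_op_smul, one_mul] using f.map_smul (1 ⊗ₜ[k] op x) 1
  obtain ⟨c, hc⟩ := (Algebra.IsCentral.mem_center_iff k).1 <|
    Subalgebra.mem_center_iff.2 fun x => (h_left x).symm.trans (h_right x)
  exact ⟨c, fun x => by rw [h_left, hc, Algebra.smul_def, Algebra.commutes]⟩

theorem AlgHom.mulLeftRight_surjective [IsSimpleRing A] [Algebra.IsCentral k A]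
    [Module.Finite k A] : Function.Surjective (AlgHom.mulLeftRight k A) := by
  have : SMulCommClass (A ⊗[k] Aᵐᵒᵖ) k A :=
    ⟨fun z c x => (AlgHom.mulLeftRight k A z).map_smul c x⟩
  have := isSimpleModule_tensorProduct_mop k A
  intro g
  obtain ⟨r, hr⟩ := IsSimpleModule.exists_forall_apply_eq_smul_of_end_scalar
    (exists_forall_apply_eq_smul_of_tensorProduct_mop k A) g
  exact ⟨r, LinearMap.ext fun x => (hr x).symm⟩

end Bimodule

theorem AlgHom.mulLeftRight_bijective (k A : Type*) [Field k] [Ring A] [Algebra k A]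
    [IsSimpleRing A] [Algebra.IsCentral k A] [FiniteDimensional k A] :
    Function.Bijective (AlgHom.mulLeftRight k A) := by
  have h_finrank : Module.finrank k (A ⊗[k] Aᵐᵒᵖ) = Module.finrank k (Module.End k A) := by
    rw [Module.finrank_tensorProduct, MulOpposite.finrank, Module.finrank_linearMap]
  have h_surj := AlgHom.mulLeftRight_surjective k A
  exact ⟨(LinearMap.injective_iff_surjective_of_finrank_eq_finrank h_finrank
    (f := (AlgHom.mulLeftRight k A).toLinearMap)).2 h_surj, h_surj⟩

theorem MonoidHom.exists_unit_eq_conj_of_equiv {A : Type*} [Monoid A] (φ : A →* A) (T : A ≃ A)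
    (hT : ∀ a x b, T (a * x * b) = φ a * T x * b) : ∃ u : Aˣ, ∀ x, φ x = u * x * ↑u⁻¹ := by
  have h_left x : T x = T 1 * x := by simpa using hT 1 1 x
  have h_right x : T x = φ x * T 1 := by simpa using hT x 1 1
  have h_inv_right : T 1 * T.symm 1 = 1 := by rw [← h_left, T.apply_symm_apply]
  have h_inv_left : T.symm 1 * T 1 = 1 :=
    T.injective <| by rw [h_left, ← mul_assoc, h_inv_right, one_mul, h_left 1, mul_one]
  refine ⟨⟨T 1, T.symm 1, h_inv_right, h_inv_left⟩, fun x => ?_⟩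
  calc φ x = φ x * T 1 * T.symm 1 := by rw [mul_assoc, h_inv_right, mul_one]
    _ = T 1 * x * T.symm 1 := by rw [← h_right, h_left]

/-- **Skolem–Noether**: every automorphism of a (finite-dimensional) central simple algebra
`A` over a field `k` is inner, i.e. given by conjugation by a unit of `A`. -/
theorem skolem_noether_inner_automorphism
    (k : Type) [Field k] (A : Type) [Ring A] [Algebra k A] [FiniteDimensional k A]
    [Algebra.IsCentral k A] [IsSimpleRing A] (φ : A ≃ₐ[k] A) :
    ∃ u : Aˣ, ∀ x : A, φ x = ↑u * x * ↑u⁻¹ := by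
  let ρ := AlgEquiv.ofBijective _ (AlgHom.mulLeftRight_bijective k A)
  let ψ : Module.End k A ≃ₐ[k] Module.End k A :=
    ρ.symm.trans ((Algebra.TensorProduct.congr φ .refl).trans ρ)
  obtain ⟨T, hT⟩ := ψ.eq_linearEquivConjAlgEquiv
  refine φ.toMonoidHom.exists_unit_eq_conj_of_equiv T.toEquiv fun a x b => ?_
  simpa [ψ, ρ] using congr($hT (ρ (a ⊗ₜ op b)) (T x)).symm
end

section
/- If A and B are central simple algebras over ℝ, each isomorphic to a matrix algebra over ℝ or over ℍ, then A ⊗_ℝ B is isomorphic to a matrix algebra Mₛ(ℝ) or Mₜ(ℍ) for suitable s or t. -/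
/-!
With `e₀, …, e₃ = 1, i, j, k`, one has `∑ eᵣ y eᵣ⋆ = 4 re y`. Hence, when `2` is invertible,
`¼ ∑ᵣ (v eᵣ e_q⋆) ⊗ eᵣ⋆ ∈ ℍ ⊗ ℍᵐᵒᵖ` acts on `ℍ` by `x ↦ re (e_q⋆ x) v`, so the action
`a ⊗ b ↦ (x ↦ a x b)` is onto `End ℍ`; over a field it is bijective by counting dimensions, and
`starAe : ℍ ≃ ℍᵐᵒᵖ` gives `ℍ ⊗ ℍ ≃ M₄`. The theorem follows from
`M_m(D) ⊗ M_n(E) ≃ M_{mn}(D ⊗ E)` and `ℝ ⊗ ℝ ≃ ℝ`, `ℝ ⊗ ℍ ≃ ℍ ⊗ ℝ ≃ ℍ`, `M_k(M₄(ℝ)) ≃ M_{4k}(ℝ)`.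
-/

open scoped TensorProduct Quaternion

namespace Quaternion

section CommRing

variable {R : Type*} [CommRing R]

def oneIJK : Fin 4 → ℍ[R] := ![1, ⟨0, 1, 0, 0⟩, ⟨0, 0, 1, 0⟩, ⟨0, 0, 0, 1⟩]

@[simp] theorem re_oneIJK (r : Fin 4) : (oneIJK r : ℍ[R]).re = ![1, 0, 0, 0] r := by
  fin_cases r <;> rfl

@[simp] theorem imI_oneIJK (r : Fin 4) : (oneIJK r : ℍ[R]).imI = ![0, 1, 0, 0] r := by
  fin_cases r <;> rfl

@[simp] theorem imJ_oneIJK (r : Fin 4) : (oneIJK r : ℍ[R]).imJ = ![0, 0, 1, 0] r := by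
  fin_cases r <;> rfl

@[simp] theorem imK_oneIJK (r : Fin 4) : (oneIJK r : ℍ[R]).imK = ![0, 0, 0, 1] r := by
  fin_cases r <;> rfl

theorem sum_oneIJK_mul_mul_star (y : ℍ[R]) :
    ∑ r, oneIJK r * y * star (oneIJK r) = ((4 * y.re : R) : ℍ[R]) := by
  ext <;> simp [Fin.sum_univ_four, re_mul, imI_mul, imJ_mul, imK_mul]
  ring

theorem sum_re_star_oneIJK_mul_smul (x : ℍ[R]) :
    ∑ q, (star (oneIJK q) * x).re • oneIJK q = x := by
  ext <;> simp [Fin.sum_univ_four, re_mul]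

theorem exists_mulLeftRight_eq_re_smul [Invertible (2 : R)] (q : Fin 4) (v : ℍ[R]) :
    ∃ t, ∀ x, AlgHom.mulLeftRight R ℍ[R] t x = (star (oneIJK q) * x).re • v := by
  let : Invertible (4 : R) := (invertibleMul (2 : R) 2).copy 4 (by norm_num)
  refine ⟨⅟(4 : R) • ∑ r, (v * oneIJK r * star (oneIJK q)) ⊗ₜ MulOpposite.op (star (oneIJK r)),
    fun x => ?_⟩
  have hsum : ∑ r, v * oneIJK r * star (oneIJK q) * x * star (oneIJK r)
      = v * ∑ r, oneIJK r * (star (oneIJK q) * x) * star (oneIJK r) := by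
    simp only [Finset.mul_sum, mul_assoc]
  simp only [map_smul, map_sum, LinearMap.smul_apply, LinearMap.sum_apply,
    AlgHom.mulLeftRight_apply, MulOpposite.unop_op, hsum, sum_oneIJK_mul_mul_star,
    mul_coe_eq_smul, smul_smul, invOf_mul_cancel_left]

theorem mulLeftRight_surjective [Invertible (2 : R)] :
    Function.Surjective (AlgHom.mulLeftRight R ℍ[R]) := by
  intro T
  choose t ht using fun q => exists_mulLeftRight_eq_re_smul q (T (oneIJK q))
  refine ⟨∑ q, t q, LinearMap.ext fun x => ?_⟩
  conv_rhs => rw [← sum_re_star_oneIJK_mul_smul x]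
  simp [ht]

end CommRing

variable {K : Type*} [Field K] [Invertible (2 : K)]

instance isAzumaya : IsAzumaya K ℍ[K] where
  bij := by
    have hrank :
        Module.finrank K (ℍ[K] ⊗[K] ℍ[K]ᵐᵒᵖ) = Module.finrank K (Module.End K ℍ[K]) := by
      simp [Module.finrank_tensorProduct, Module.finrank_linearMap, MulOpposite.finrank,
        finrank_eq_four]
    exact ⟨(LinearMap.injective_iff_surjective_of_finrank_eq_finrank
      (f := (AlgHom.mulLeftRight K ℍ[K]).toLinearMap) hrank).2 mulLeftRight_surjective,
      mulLeftRight_surjective⟩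

variable (K) in
noncomputable def tensorSelfAlgEquivMatrix : ℍ[K] ⊗[K] ℍ[K] ≃ₐ[K] Matrix (Fin 4) (Fin 4) K :=
  (Algebra.TensorProduct.congr AlgEquiv.refl starAe).trans <|
    (AlgEquiv.ofBijective _ IsAzumaya.bij).trans <|
      algEquivMatrix (Module.finBasisOfFinrankEq K ℍ[K] finrank_eq_four)

end Quaternion

section MatrixAlgebras

variable {R A B D E : Type*} [CommRing R] [Ring A] [Algebra R A] [Ring B] [Algebra R B]
  [Ring D] [Algebra R D] [Ring E] [Algebra R E]
  {m n : Type*} [Fintype m] [DecidableEq m] [Fintype n] [DecidableEq n]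

noncomputable def AlgEquiv.tensorCongrMatrix (eA : A ≃ₐ[R] Matrix m m D)
    (eB : B ≃ₐ[R] Matrix n n E) :
    A ⊗[R] B ≃ₐ[R] Matrix (m × n) (m × n) (D ⊗[R] E) :=
  (Algebra.TensorProduct.congr eA eB).trans (Matrix.kroneckerTMulAlgEquiv m n R R D E)

theorem AlgEquiv.exists_algEquiv_matrix_fin [Nonempty m] (e : A ≃ₐ[R] Matrix m m D) :
    ∃ s : ℕ, 0 < s ∧ Nonempty (A ≃ₐ[R] Matrix (Fin s) (Fin s) D) :=
  ⟨Fintype.card m, Fintype.card_pos,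
    ⟨e.trans (Matrix.reindexAlgEquiv R D (Fintype.equivFin m))⟩⟩

end MatrixAlgebras

theorem tensor_of_real_or_quaternionic_matrix_algebras_general
    (A B : Type) [Ring A] [Algebra ℝ A] [Ring B] [Algebra ℝ B]
    (hA : (∃ n : ℕ, 0 < n ∧ Nonempty (A ≃ₐ[ℝ] Matrix (Fin n) (Fin n) ℝ)) ∨
          (∃ n : ℕ, 0 < n ∧ Nonempty (A ≃ₐ[ℝ] Matrix (Fin n) (Fin n) (Quaternion ℝ))))
    (hB : (∃ n : ℕ, 0 < n ∧ Nonempty (B ≃ₐ[ℝ] Matrix (Fin n) (Fin n) ℝ)) ∨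
          (∃ n : ℕ, 0 < n ∧ Nonempty (B ≃ₐ[ℝ] Matrix (Fin n) (Fin n) (Quaternion ℝ)))) :
    (∃ s : ℕ, 0 < s ∧ Nonempty ((A ⊗[ℝ] B) ≃ₐ[ℝ] Matrix (Fin s) (Fin s) ℝ)) ∨
    (∃ t : ℕ, 0 < t ∧ Nonempty ((A ⊗[ℝ] B) ≃ₐ[ℝ] Matrix (Fin t) (Fin t) (Quaternion ℝ))) := by
  rcases hA with ⟨m, hm, ⟨eA⟩⟩ | ⟨m, hm, ⟨eA⟩⟩ <;>
    rcases hB with ⟨n, hn, ⟨eB⟩⟩ | ⟨n, hn, ⟨eB⟩⟩ <;>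
    have := Fin.pos_iff_nonempty.mp hm <;> have := Fin.pos_iff_nonempty.mp hn <;>
    have e := eA.tensorCongrMatrix eB
  · exact .inl (e.trans (Algebra.TensorProduct.lid ℝ ℝ).mapMatrix).exists_algEquiv_matrix_fin
  · exact .inr (e.trans (Algebra.TensorProduct.lid ℝ ℍ[ℝ]).mapMatrix).exists_algEquiv_matrix_fin
  · exact .inr (e.trans (Algebra.TensorProduct.rid ℝ ℝ ℍ[ℝ]).mapMatrix).exists_algEquiv_matrix_fin
  · exact .inl ((e.trans (Quaternion.tensorSelfAlgEquivMatrix ℝ).mapMatrix).trans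
      (Matrix.compAlgEquiv _ _ ℝ ℝ)).exists_algEquiv_matrix_fin

/-- If `A` and `B` are central simple `ℝ`-algebras, each isomorphic to a matrix algebra over
`ℝ` or over the Hamilton quaternions `ℍ`, then `A ⊗_ℝ B` is isomorphic to a matrix algebra
`Mₛ(ℝ)` or `Mₜ(ℍ)` for a suitable `s` or `t`. -/
theorem tensor_of_real_or_quaternionic_matrix_algebras
    (A B : Type) [Ring A] [Algebra ℝ A] [Ring B] [Algebra ℝ B]
    [FiniteDimensional ℝ A] [Algebra.IsCentral ℝ A] [IsSimpleRing A]
    [FiniteDimensional ℝ B] [Algebra.IsCentral ℝ B] [IsSimpleRing B]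
    (hA : (∃ n : ℕ, 0 < n ∧ Nonempty (A ≃ₐ[ℝ] Matrix (Fin n) (Fin n) ℝ)) ∨
          (∃ n : ℕ, 0 < n ∧ Nonempty (A ≃ₐ[ℝ] Matrix (Fin n) (Fin n) (Quaternion ℝ))))
    (hB : (∃ n : ℕ, 0 < n ∧ Nonempty (B ≃ₐ[ℝ] Matrix (Fin n) (Fin n) ℝ)) ∨
          (∃ n : ℕ, 0 < n ∧ Nonempty (B ≃ₐ[ℝ] Matrix (Fin n) (Fin n) (Quaternion ℝ)))) :
    (∃ s : ℕ, 0 < s ∧ Nonempty ((A ⊗[ℝ] B) ≃ₐ[ℝ] Matrix (Fin s) (Fin s) ℝ)) ∨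
    (∃ t : ℕ, 0 < t ∧ Nonempty ((A ⊗[ℝ] B) ≃ₐ[ℝ] Matrix (Fin t) (Fin t) (Quaternion ℝ))) :=
  tensor_of_real_or_quaternionic_matrix_algebras_general A B hA hB
end

section
/- If A is a finite-dimensional simple ℝ-algebra and G a finite group acting on A by ℝ-algebra automorphisms, then the fixed subalgebra A^G is a semisimple ℝ-algebra, i.e., a finite product of simple ℝ-algebras. -/
open Module LinearMap

/-- A finite product of semisimple modules is semisimple. -/
lemma piIsSemisimpleModule {R : Type} [Ring R] {ι : Type} [Finite ι]
    (M : ι → Type) [∀ i, AddCommGroup (M i)] [∀ i, Module R (M i)]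
    [∀ i, IsSemisimpleModule R (M i)] : IsSemisimpleModule R (∀ i, M i) := by
  classical
  refine isSemisimpleModule_of_isSemisimpleModule_submodule'
    (p := fun i => range (LinearMap.single R M i)) (fun i => ?_) ?_
  · exact IsSemisimpleModule.congr
      (LinearEquiv.ofInjective (LinearMap.single R M i) (Pi.single_injective i)).symm
  · simp_rw [range_eq_map]
    rw [Submodule.iSup_map_single, Submodule.pi_top]

/-- A finite-dimensional `ℝ`-algebra carrying a nondegenerate, symmetric, associative
bilinear form that vanishes on `(nilpotent, 1)` pairs is semisimple. -/
theorem isSemisimpleRing_of_form (R : Type) [Ring R] [Algebra ℝ R] [FiniteDimensional ℝ R]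
    [Nontrivial R]
    (B : R →ₗ[ℝ] R →ₗ[ℝ] ℝ)
    (hsym : ∀ x y, B x y = B y x)
    (hassoc : ∀ x y z, B (x * y) z = B x (y * z))
    (hnil : ∀ x : R, IsNilpotent x → B x 1 = 0)
    (hnd : ∀ x : R, (∀ y, B x y = 0) → x = 0) :
    IsSemisimpleRing R := by
  classical
  -- the set of dimensions of finite intersections of maximal left ideals
  set S : Set ℕ := {n | ∃ (k : ℕ) (m : Fin k → Ideal R), (∀ i, (m i).IsMaximal) ∧
    n = finrank ℝ (Submodule.restrictScalars ℝ ((⨅ i, m i) : Ideal R))} with hS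
  have hSne : S.Nonempty := ⟨_, 0, (fun i => i.elim0), fun i => i.elim0, rfl⟩
  obtain ⟨k, m, hmax, hrank⟩ := Nat.sInf_mem hSne
  set M : Ideal R := ⨅ i, m i with hM
  -- M is contained in every maximal left ideal
  have key : ∀ m' : Ideal R, m'.IsMaximal → M ≤ m' := by
    intro m' hm'
    by_contra hle
    have hlt : M ⊓ m' < M := lt_of_le_of_ne inf_le_left (fun h => hle (h ▸ inf_le_right))
    have hlt' : Submodule.restrictScalars ℝ (M ⊓ m') < Submodule.restrictScalars ℝ M :=
      lt_of_le_of_ne (fun x hx => hlt.le hx)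
        (fun h => hlt.ne (Submodule.restrictScalars_injective ℝ R R h))
    have hmem : finrank ℝ (Submodule.restrictScalars ℝ (M ⊓ m')) ∈ S := by
      refine ⟨k + 1, Fin.cons m' m, ?_, ?_⟩
      · intro i
        refine Fin.cases ?_ ?_ i
        · exact hm'
        · exact fun j => hmax j
      · have eq : (⨅ i, (Fin.cons m' m : Fin (k+1) → Ideal R) i) = m' ⊓ M := by
          refine le_antisymm (le_inf ?_ (le_iInf fun j => ?_)) (le_iInf fun i => ?_)
          · simpa using iInf_le (fun i => (Fin.cons m' m : Fin (k+1) → Ideal R) i) 0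
          · simpa using iInf_le (fun i => (Fin.cons m' m : Fin (k+1) → Ideal R) i) j.succ
          · refine Fin.cases ?_ (fun j => ?_) i
            · simpa using inf_le_left
            · simpa using inf_le_right.trans (iInf_le _ j)
        rw [eq, inf_comm]
    have h1 := Nat.sInf_le hmem
    have h2 := Submodule.finrank_lt_finrank_of_lt hlt'
    omega
  -- every element of M is nilpotent
  have hnilp : ∀ y ∈ M, IsNilpotent y := by
    intro y hy
    -- find a power with stable span
    set f : ℕ → ℕ := fun j => finrank ℝ
      (Submodule.restrictScalars ℝ (Ideal.span {y ^ (j + 1)})) with hf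
    obtain ⟨j₀, hj₀⟩ : ∃ j₀, f j₀ = sInf (Set.range f) := Nat.sInf_mem (Set.range_nonempty f)
    have hle : Ideal.span {y ^ (j₀ + 2)} ≤ Ideal.span {y ^ (j₀ + 1)} := by
      rw [Ideal.span_singleton_le_iff_mem]
      have : y ^ (j₀ + 2) = y • y ^ (j₀ + 1) := by rw [smul_eq_mul, ← pow_succ']
      rw [this]
      exact Ideal.mul_mem_left _ _ (Ideal.subset_span rfl)
    have heq : Ideal.span {y ^ (j₀ + 2)} = Ideal.span {y ^ (j₀ + 1)} := by
      apply Submodule.restrictScalars_injective ℝ R R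
      apply Submodule.eq_of_le_of_finrank_le (fun x hx => hle hx)
      show f j₀ ≤ f (j₀ + 1)
      rw [hj₀]
      exact Nat.sInf_le ⟨j₀ + 1, rfl⟩
    have hmem : y ^ (j₀ + 1) ∈ Ideal.span {y ^ (j₀ + 2)} := heq ▸ Ideal.subset_span rfl
    obtain ⟨c, hc⟩ : ∃ c, c • y ^ (j₀ + 2) = y ^ (j₀ + 1) :=
      Submodule.mem_span_singleton.mp hmem
    have hzero : (1 - c * y) * y ^ (j₀ + 1) = 0 := by
      have : c * y * y ^ (j₀ + 1) = y ^ (j₀ + 1) := by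
        rw [mul_assoc, ← pow_succ']
        simpa [smul_eq_mul, mul_assoc] using hc
      rw [sub_mul, one_mul, this, sub_self]
    -- 1 - c*y is left invertible
    have hcy : c * y ∈ M := M.smul_mem c hy
    have hspan : Ideal.span {1 - c * y} = ⊤ := by
      by_contra hne
      obtain ⟨m', hm', hle'⟩ := Ideal.exists_le_maximal _ hne
      have h1 : (1 : R) - c * y ∈ m' := hle' (Ideal.subset_span rfl)
      have h2 : c * y ∈ m' := key m' hm' hcy
      have : (1 : R) ∈ m' := by simpa using m'.add_mem h1 h2
      exact hm'.ne_top ((Ideal.eq_top_iff_one m').mpr this)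
    obtain ⟨u, hu⟩ : ∃ u, u • (1 - c * y) = 1 :=
      Submodule.mem_span_singleton.mp (hspan ▸ Submodule.mem_top)
    refine ⟨j₀ + 1, ?_⟩
    calc y ^ (j₀ + 1) = (u * (1 - c * y)) * y ^ (j₀ + 1) := by
          rw [smul_eq_mul] at hu; rw [hu, one_mul]
      _ = u * ((1 - c * y) * y ^ (j₀ + 1)) := by rw [mul_assoc]
      _ = 0 := by rw [hzero, mul_zero]
  -- M = ⊥
  have hMbot : M = ⊥ := by
    rw [eq_bot_iff]
    intro x hx
    have : x = 0 := by
      apply hnd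
      intro r
      rw [hsym]
      have h1 : B (r * x) 1 = B r x := by rw [hassoc, mul_one]
      rw [← h1]
      exact hnil _ (hnilp _ (M.smul_mem r hx))
    simp [this]
  -- R embeds into a finite product of simple modules
  letI F : R →ₗ[R] ∀ i : Fin k, R ⧸ m i := LinearMap.pi (fun i => (m i).mkQ)
  have hker : LinearMap.ker F = ⊥ := by
    rw [LinearMap.ker_pi]
    simp only [Submodule.ker_mkQ]
    exact hMbot
  have hinj : Function.Injective F := LinearMap.ker_eq_bot.mp hker
  haveI : ∀ i : Fin k, IsSimpleModule R (R ⧸ m i) := fun i =>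
    isSimpleModule_iff_isCoatom.mpr (hmax i).out
  haveI : IsSemisimpleModule R (∀ i : Fin k, R ⧸ m i) := piIsSemisimpleModule _
  haveI : IsSemisimpleModule R ↥(LinearMap.range F) := inferInstance
  have : IsSemisimpleModule R R :=
    IsSemisimpleModule.congr (N := R) (M := ↥(LinearMap.range F))
      (LinearEquiv.ofInjective F hinj)
  exact this


section Helpers

variable {ι₁ ι₂ : Type}

/-- Product of algebra equivalences. -/
def algEquivProdCongr {A B C D : Type} [Semiring A] [Semiring B] [Semiring C] [Semiring D]
    [Algebra ℝ A] [Algebra ℝ B] [Algebra ℝ C] [Algebra ℝ D]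
    (e₁ : A ≃ₐ[ℝ] B) (e₂ : C ≃ₐ[ℝ] D) : (A × C) ≃ₐ[ℝ] (B × D) where
  toFun p := (e₁ p.1, e₂ p.2)
  invFun p := (e₁.symm p.1, e₂.symm p.2)
  left_inv p := by simp
  right_inv p := by simp
  map_mul' p q := by simp [Prod.mul_def]
  map_add' p q := by simp
  commutes' r := by
    have : algebraMap ℝ (B × D) r = (algebraMap ℝ B r, algebraMap ℝ D r) := rfl
    rw [this]
    exact Prod.ext (e₁.commutes r) (e₂.commutes r)

instance sumElimRing (C₁ : ι₁ → Type) (C₂ : ι₂ → Type)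
    [∀ j, Ring (C₁ j)] [∀ j, Ring (C₂ j)] : ∀ i, Ring (Sum.elim C₁ C₂ i)
  | .inl _ => inferInstanceAs (Ring (C₁ _))
  | .inr _ => inferInstanceAs (Ring (C₂ _))

instance sumElimAlgebra (C₁ : ι₁ → Type) (C₂ : ι₂ → Type)
    [∀ j, Ring (C₁ j)] [∀ j, Ring (C₂ j)]
    [∀ j, Algebra ℝ (C₁ j)] [∀ j, Algebra ℝ (C₂ j)] : ∀ i, Algebra ℝ (Sum.elim C₁ C₂ i)
  | .inl _ => inferInstanceAs (Algebra ℝ (C₁ _))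
  | .inr _ => inferInstanceAs (Algebra ℝ (C₂ _))

/-- A product of two finite products of algebras is a finite product over the sum type. -/
def algEquivPiSum (C₁ : ι₁ → Type) (C₂ : ι₂ → Type)
    [∀ j, Ring (C₁ j)] [∀ j, Ring (C₂ j)]
    [∀ j, Algebra ℝ (C₁ j)] [∀ j, Algebra ℝ (C₂ j)] :
    ((∀ j, C₁ j) × (∀ j, C₂ j)) ≃ₐ[ℝ] (∀ i : ι₁ ⊕ ι₂, Sum.elim C₁ C₂ i) where
  toFun p := fun i => match i with | .inl j => p.1 j | .inr j => p.2 j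
  invFun q := (fun j => q (.inl j), fun j => q (.inr j))
  left_inv p := rfl
  right_inv q := by funext i; cases i <;> rfl
  map_mul' p q := by funext i; cases i <;> rfl
  map_add' p q := by funext i; cases i <;> rfl
  commutes' r := by funext i; cases i <;> rfl

/-- The equivalence of an algebra with the product over `Unit`. -/
def algEquivFunUnique (R : Type) [Semiring R] [Algebra ℝ R] : R ≃ₐ[ℝ] (Unit → R) :=
  AlgEquiv.ofLinearEquiv (LinearEquiv.funUnique Unit ℝ R).symm rfl (fun _ _ => rfl)

/-- The ring structure on a two-sided ideal with a multiplicative identity. -/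
@[reducible] def idealRing {R : Type} [Ring R] [Algebra ℝ R] (W : Submodule ℝ R)
    (hmul : ∀ x ∈ W, ∀ y ∈ W, x * y ∈ W) (e : R) (he : e ∈ W)
    (hel : ∀ x ∈ W, e * x = x) (her : ∀ x ∈ W, x * e = x) : Ring ↥W :=
  { (inferInstance : AddCommGroup ↥W) with
    mul := fun x y => ⟨x.1 * y.1, hmul _ x.2 _ y.2⟩
    one := ⟨e, he⟩
    mul_assoc := fun a b c => Subtype.ext (mul_assoc (a : R) b c)
    one_mul := fun a => Subtype.ext (hel _ a.2)
    mul_one := fun a => Subtype.ext (her _ a.2)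
    left_distrib := fun a b c => Subtype.ext (mul_add (a : R) b c)
    right_distrib := fun a b c => Subtype.ext (add_mul (a : R) b c)
    zero_mul := fun a => Subtype.ext (zero_mul (a : R))
    mul_zero := fun a => Subtype.ext (mul_zero (a : R)) }

end Helpers


private lemma orthKer_eq_zero (R : Type) [Ring R] [Algebra ℝ R] [IsSemisimpleRing R]
    (B : R →ₗ[ℝ] R →ₗ[ℝ] ℝ)
    (hsym : ∀ x y, B x y = B y x)
    (hassoc : ∀ x y z, B (x * y) z = B x (y * z))
    (hnd : ∀ x : R, (∀ y, B x y = 0) → x = 0)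
    (W : Submodule ℝ R)
    (hWl : ∀ (r : R), ∀ x ∈ W, r * x ∈ W)
    (hWr : ∀ (r : R), ∀ x ∈ W, x * r ∈ W) :
    ∀ x ∈ W, (∀ y ∈ W, B x y = 0) → x = 0 := by
  have hKsmul : ∀ (r : R) (z : R), (z ∈ W ∧ ∀ y ∈ W, B z y = 0) →
      (r * z ∈ W ∧ ∀ y ∈ W, B (r * z) y = 0) := by
    intro r z hz
    refine ⟨hWl r z hz.1, fun y hy => ?_⟩
    have h1 : B (r * z) y = B z (y * r) :=
      ((hsym _ _).trans (hassoc _ _ _).symm).trans (hsym _ _)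
    rw [h1, hz.2 _ (hWr r y hy)]
  let K : Ideal R :=
    { carrier := {z | z ∈ W ∧ ∀ y ∈ W, B z y = 0}
      add_mem' := fun {a b} ha hb => ⟨W.add_mem ha.1 hb.1, fun y hy => by
        rw [map_add, LinearMap.add_apply, ha.2 y hy, hb.2 y hy, add_zero]⟩
      zero_mem' := ⟨W.zero_mem, fun y _ => by rw [map_zero, LinearMap.zero_apply]⟩
      smul_mem' := fun r z hz => hKsmul r z hz }
  have hmemK : ∀ z : R, z ∈ K ↔ (z ∈ W ∧ ∀ y ∈ W, B z y = 0) := fun z => Iff.rfl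
  intro x hx hxy
  obtain ⟨e', hide', hspan⟩ := IsSemisimpleRing.ideal_eq_span_idempotent K
  have he'K : e' ∈ K := hspan ▸ Ideal.subset_span (Set.mem_singleton _)
  have he'0 : e' = 0 := by
    apply hnd
    intro r
    have h1 : B e' r = B e' (e' * r) := by
      conv_lhs => rw [← hide', hassoc]
    rw [h1]
    exact ((hmemK e').mp he'K).2 _ (hWr r e' ((hmemK e').mp he'K).1)
  have hxK : x ∈ K := (hmemK x).mpr ⟨hx, hxy⟩
  rw [hspan, he'0] at hxK
  obtain ⟨a, ha⟩ := Submodule.mem_span_singleton.mp hxK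
  rw [← ha, smul_zero]

/-- Decomposition of a finite-dimensional semisimple real algebra, equipped with a
nondegenerate symmetric associative bilinear form, into a product of simple algebras. -/
theorem decomp (n : ℕ) :
    ∀ (R : Type) [Ring R] [Algebra ℝ R] [FiniteDimensional ℝ R] [Nontrivial R]
      [IsSemisimpleRing R] (B : R →ₗ[ℝ] R →ₗ[ℝ] ℝ),
      (∀ x y, B x y = B y x) →
      (∀ x y z, B (x * y) z = B x (y * z)) →
      (∀ x : R, (∀ y, B x y = 0) → x = 0) →
      finrank ℝ R ≤ n →
      ∃ (ι : Type) (_ : Fintype ι) (C : ι → Type) (_ : ∀ i, Ring (C i))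
        (_ : ∀ i, Algebra ℝ (C i)),
        (∀ i, IsSimpleRing (C i)) ∧ Nonempty (R ≃ₐ[ℝ] ((i : ι) → C i)) := by
  induction n with
  | zero =>
    intro R _ _ _ _ _ B _ _ _ hle
    exact absurd (Module.finrank_pos (R := ℝ) (M := R)) (by omega)
  | succ n IH =>
    intro R _ _ _ _ _ B hsym hassoc hnd hle
    by_cases hsimp : IsSimpleRing R
    · exact ⟨Unit, inferInstance, fun _ => R, fun _ => inferInstance, fun _ => inferInstance,
        fun _ => hsimp, ⟨algEquivFunUnique R⟩⟩
    -- R is not simple: find a proper nonzero two-sided ideal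
    have hrefl : (B : LinearMap.BilinForm ℝ R).IsRefl := fun x y h => by rw [hsym]; exact h
    obtain ⟨T, hTbot, hTtop⟩ : ∃ T : TwoSidedIdeal R, T ≠ ⊥ ∧ T ≠ ⊤ := by
      by_contra h
      push_neg at h
      refine hsimp ⟨⟨?_⟩⟩
      · intro T
        by_cases hT : T = ⊥
        · exact Or.inl hT
        · exact Or.inr (h T hT)
    -- the ideal as an ℝ-submodule
    set W : Submodule ℝ R := Submodule.restrictScalars ℝ (T.asIdeal) with hW
    have hmemW : ∀ x : R, x ∈ W ↔ x ∈ T := fun x => Iff.rfl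
    have hWl : ∀ (r : R), ∀ x ∈ W, r * x ∈ W := fun r x hx => T.mul_mem_left r x hx
    have hWr : ∀ (r : R), ∀ x ∈ W, x * r ∈ W := fun r x hx => T.mul_mem_right x r hx
    have hker : ∀ x ∈ W, (∀ y ∈ W, B x y = 0) → x = 0 :=
      orthKer_eq_zero R B hsym hassoc hnd W hWl hWr
    have hres : (LinearMap.BilinForm.restrict (B : LinearMap.BilinForm ℝ R) W).Nondegenerate := by
      refine (LinearMap.IsRefl.nondegenerate_iff_separatingLeft (B := LinearMap.BilinForm.restrict (B : LinearMap.BilinForm ℝ R) W) (fun x y h => hrefl _ _ h)).mpr ?_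
      rintro ⟨x, hx⟩ h
      ext
      refine hker x hx fun y hy => ?_
      have := h ⟨y, hy⟩
      simpa using this
    set J : Submodule ℝ R := LinearMap.BilinForm.orthogonal (B : LinearMap.BilinForm ℝ R) W with hJ
    have hcompl : IsCompl W J :=
      LinearMap.BilinForm.isCompl_orthogonal_of_restrict_nondegenerate hrefl hres
    have hmemJ : ∀ x : R, x ∈ J ↔ ∀ a ∈ W, B a x = 0 := by
      intro x
      rw [hJ, LinearMap.BilinForm.mem_orthogonal_iff]
    have hJl : ∀ (r : R), ∀ x ∈ J, r * x ∈ J := by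
      intro r x hx
      rw [hmemJ] at hx ⊢
      intro a ha
      rw [← hassoc]
      exact hx _ (hWr r a ha)
    have hJr : ∀ (r : R), ∀ x ∈ J, x * r ∈ J := by
      intro r x hx
      rw [hmemJ] at hx ⊢
      intro a ha
      have h1 : B a (x * r) = B (r * a) x :=
        ((hsym _ _).trans (hassoc _ _ _)).trans (hsym _ _)
      rw [h1]
      exact hx _ (hWl r a ha)
    -- products between W and J vanish
    have hWJ : ∀ x ∈ W, ∀ y ∈ J, x * y = 0 := by
      intro x hx y hy
      have h1 : x * y ∈ W ⊓ J := ⟨hWr y x hx, hJl x y hy⟩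
      rw [hcompl.inf_eq_bot] at h1
      exact h1
    have hJW : ∀ y ∈ J, ∀ x ∈ W, y * x = 0 := by
      intro y hy x hx
      have h1 : y * x ∈ W ⊓ J := ⟨hWl y x hx, hJr x y hy⟩
      rw [hcompl.inf_eq_bot] at h1
      exact h1
    -- decompose the identity
    obtain ⟨e, he, f, hf, hef⟩ : ∃ e ∈ W, ∃ f ∈ J, e + f = 1 := by
      have : (1 : R) ∈ W ⊔ J := by rw [hcompl.sup_eq_top]; trivial
      exact Submodule.mem_sup.mp this
    have hxe : ∀ x ∈ W, x * e = x := by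
      intro x hx
      have h1 : x * e + x * f = x := by rw [← mul_add, hef, mul_one]
      rw [hWJ x hx f hf, add_zero] at h1
      exact h1
    have hex : ∀ x ∈ W, e * x = x := by
      intro x hx
      have h1 : e * x + f * x = x := by rw [← add_mul, hef, one_mul]
      rw [hJW f hf x hx, add_zero] at h1
      exact h1
    have hyf : ∀ y ∈ J, y * f = y := by
      intro y hy
      have h1 : y * e + y * f = y := by rw [← mul_add, hef, mul_one]
      rw [hJW y hy e he, zero_add] at h1
      exact h1
    have hfy : ∀ y ∈ J, f * y = y := by
      intro y hy
      have h1 : e * y + f * y = y := by rw [← add_mul, hef, one_mul]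
      rw [hWJ e he y hy, zero_add] at h1
      exact h1
    have hcentral : ∀ r : R, e * r = r * e := by
      intro r
      have h1 : e * r = e * r * e := by
        have h2 : e * r * e + e * r * f = e * r := by rw [← mul_add, hef, mul_one]
        rw [hWJ (e * r) (hWr r e he) f hf, add_zero] at h2
        exact h2.symm
      have h3 : r * e = e * (r * e) := (hex _ (hWl r e he)).symm
      rw [h1, h3, mul_assoc]
    -- W and J are nonzero
    have hWbot : W ≠ ⊥ := by
      intro h
      apply hTbot
      refine SetLike.ext fun x => ?_
      rw [TwoSidedIdeal.mem_bot]
      constructor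
      · intro hx
        have : x ∈ W := (hmemW x).mpr hx
        rw [h] at this
        simpa using this
      · rintro rfl; exact T.zero_mem
    have hJbot : J ≠ ⊥ := by
      intro h
      apply hTtop
      have hWtop : W = ⊤ := by
        have := hcompl.sup_eq_top
        rwa [h, sup_bot_eq] at this
      refine SetLike.ext fun x => ?_
      simp only [TwoSidedIdeal.mem_top]
      constructor
      · intro _; trivial
      · intro _
        have : x ∈ W := by rw [hWtop]; trivial
        exact (hmemW x).mp this
    have hWtop' : W ≠ ⊤ := by
      intro h
      apply hJbot
      have := hcompl.inf_eq_bot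
      rwa [h, top_inf_eq] at this
    have hJtop' : J ≠ ⊤ := by
      intro h
      apply hWbot
      have := hcompl.inf_eq_bot
      rwa [h, inf_top_eq] at this
    have he0 : e ≠ 0 := by
      intro h
      apply hWbot
      rw [eq_bot_iff]
      intro x hx
      have : x = e * x := (hex x hx).symm
      rw [h, zero_mul] at this
      simpa using this
    have hf0 : f ≠ 0 := by
      intro h
      apply hJbot
      rw [eq_bot_iff]
      intro y hy
      have : y = f * y := (hfy y hy).symm
      rw [h, zero_mul] at this
      simpa using this
    have hee : e * e = e := hex e he
    -- ring and algebra structures on W and J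
    letI ringW : Ring ↥W := idealRing W (fun x hx y hy => hWr y x hx) e he hex hxe
    letI ringJ : Ring ↥J := idealRing J (fun x hx y hy => hJr y x hx) f hf hfy hyf
    letI algW : Algebra ℝ ↥W := Algebra.ofModule
      (fun r x y => Subtype.ext (smul_mul_assoc r x.1 y.1))
      (fun r x y => Subtype.ext (mul_smul_comm r x.1 y.1))
    letI algJ : Algebra ℝ ↥J := Algebra.ofModule
      (fun r x y => Subtype.ext (smul_mul_assoc r x.1 y.1))
      (fun r x y => Subtype.ext (mul_smul_comm r x.1 y.1))
    haveI ntW : Nontrivial ↥W := ⟨⟨1, 0, fun h => he0 (show e = 0 from congrArg Subtype.val h)⟩⟩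
    haveI ntJ : Nontrivial ↥J := ⟨⟨1, 0, fun h => hf0 (show f = 0 from congrArg Subtype.val h)⟩⟩
    -- W and J are semisimple rings
    have hmulWe : ∀ x y : R, (x * e) * (y * e) = (x * y) * e := by
      intro x y
      have h2 : e * (y * e) = y * e := hex _ (hWl y e he)
      rw [mul_assoc x e (y * e), h2, ← mul_assoc]
    letI ρW : R →+* ↥W :=
      { toFun := fun x => ⟨x * e, hWl x e he⟩
        map_one' := Subtype.ext (one_mul e)
        map_mul' := fun x y => Subtype.ext (hmulWe x y).symm
        map_zero' := Subtype.ext (zero_mul e)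
        map_add' := fun x y => Subtype.ext (add_mul x y e) }
    have hρWsurj : Function.Surjective ρW := fun a => ⟨a.1, Subtype.ext (hxe _ a.2)⟩
    haveI ssW : IsSemisimpleRing ↥W := RingHom.isSemisimpleRing_of_surjective ρW hρWsurj
    have hmulJf : ∀ x y : R, (x * f) * (y * f) = (x * y) * f := by
      intro x y
      have h2 : f * (y * f) = y * f := hfy _ (hJl y f hf)
      rw [mul_assoc x f (y * f), h2, ← mul_assoc]
    letI ρJ : R →+* ↥J :=
      { toFun := fun x => ⟨x * f, hJl x f hf⟩
        map_one' := Subtype.ext (one_mul f)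
        map_mul' := fun x y => Subtype.ext (hmulJf x y).symm
        map_zero' := Subtype.ext (zero_mul f)
        map_add' := fun x y => Subtype.ext (add_mul x y f) }
    have hρJsurj : Function.Surjective ρJ := fun a => ⟨a.1, Subtype.ext (hyf _ a.2)⟩
    haveI ssJ : IsSemisimpleRing ↥J := RingHom.isSemisimpleRing_of_surjective ρJ hρJsurj
    -- restricted forms
    letI BW : ↥W →ₗ[ℝ] ↥W →ₗ[ℝ] ℝ := LinearMap.domRestrict₁₂ B W W
    letI BJ : ↥J →ₗ[ℝ] ↥J →ₗ[ℝ] ℝ := LinearMap.domRestrict₁₂ B J J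
    have hBWapp : ∀ x y : ↥W, BW x y = B x.1 y.1 := fun x y => rfl
    have hBJapp : ∀ x y : ↥J, BJ x y = B x.1 y.1 := fun x y => rfl
    have hndW : ∀ x : ↥W, (∀ y, BW x y = 0) → x = 0 := by
      intro x h
      refine Subtype.ext (hnd x.1 fun r => ?_)
      obtain ⟨w, hw, j, hj, rfl⟩ := Submodule.mem_sup.mp
        (by rw [hcompl.sup_eq_top]; trivial : (r : R) ∈ W ⊔ J)
      rw [map_add]
      have h1 : B x.1 w = 0 := h ⟨w, hw⟩
      have h2 : B x.1 j = 0 := (hmemJ j).mp hj x.1 x.2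
      rw [h1, h2, add_zero]
    have hndJ : ∀ x : ↥J, (∀ y, BJ x y = 0) → x = 0 := by
      intro x h
      refine Subtype.ext (hnd x.1 fun r => ?_)
      obtain ⟨w, hw, j, hj, rfl⟩ := Submodule.mem_sup.mp
        (by rw [hcompl.sup_eq_top]; trivial : (r : R) ∈ W ⊔ J)
      rw [map_add]
      have h1 : B x.1 j = 0 := h ⟨j, hj⟩
      have h2 : B x.1 w = 0 := by rw [hsym]; exact (hmemJ x.1).mp x.2 w hw
      rw [h1, h2, zero_add]
    -- dimensions drop
    have hWn : finrank ℝ ↥W ≤ n := by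
      have := Submodule.finrank_lt hWtop'
      omega
    have hJn : finrank ℝ ↥J ≤ n := by
      have := Submodule.finrank_lt hJtop'
      omega
    -- the algebra equivalence R ≃ W × J
    letI Φ := Submodule.prodEquivOfIsCompl W J hcompl
    have hΦ : ∀ p : ↥W × ↥J, Φ p = (p.1 : R) + (p.2 : R) := by
      intro p
      have h1 := DFunLike.congr_fun (Submodule.coe_prodEquivOfIsCompl W J hcompl) p
      simp only [LinearMap.coprod_apply, Submodule.subtype_apply] at h1
      exact h1
    have algE : R ≃ₐ[ℝ] (↥W × ↥J) := by
      refine AlgEquiv.ofLinearEquiv Φ.symm ?_ ?_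
      · rw [LinearEquiv.symm_apply_eq]
        show (1 : R) = Φ (⟨e, he⟩, ⟨f, hf⟩)
        rw [hΦ]
        exact hef.symm
      · intro x y
        apply Φ.injective
        rw [Φ.apply_symm_apply]
        set a := Φ.symm x with ha
        set b := Φ.symm y with hb
        have hx : x = (a.1 : R) + (a.2 : R) := by rw [ha, ← hΦ, Φ.apply_symm_apply]
        have hy : y = (b.1 : R) + (b.2 : R) := by rw [hb, ← hΦ, Φ.apply_symm_apply]
        have hmul2 : Φ (a * b) = (a.1.1 * b.1.1) + (a.2.1 * b.2.1) := hΦ _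
        rw [hmul2, hx, hy]
        have c1 : (a.1 : R) * (b.2 : R) = 0 := hWJ _ a.1.2 _ b.2.2
        have c2 : (a.2 : R) * (b.1 : R) = 0 := hJW _ a.2.2 _ b.1.2
        rw [add_mul, mul_add, mul_add, c1, c2, add_zero, zero_add]
    -- apply the induction hypothesis
    obtain ⟨ι₁, fin₁, C₁, ring₁, alg₁, hsC₁, ⟨E₁⟩⟩ :=
      IH ↥W BW (fun x y => hsym x.1 y.1) (fun x y z => hassoc x.1 y.1 z.1) hndW hWn
    obtain ⟨ι₂, fin₂, C₂, ring₂, alg₂, hsC₂, ⟨E₂⟩⟩ :=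
      IH ↥J BJ (fun x y => hsym x.1 y.1) (fun x y z => hassoc x.1 y.1 z.1) hndJ hJn
    haveI := fin₁; haveI := fin₂
    letI : ∀ j, Ring (C₁ j) := ring₁
    letI : ∀ j, Ring (C₂ j) := ring₂
    letI : ∀ j, Algebra ℝ (C₁ j) := alg₁
    letI : ∀ j, Algebra ℝ (C₂ j) := alg₂
    refine ⟨ι₁ ⊕ ι₂, inferInstance, Sum.elim C₁ C₂, inferInstance, inferInstance, ?_, ?_⟩
    · intro i
      cases i with
      | inl j => exact hsC₁ j
      | inr j => exact hsC₂ j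
    · exact ⟨algE.trans ((algEquivProdCongr E₁ E₂).trans (algEquivPiSum C₁ C₂))⟩

/-- The subalgebra of invariants `A^G` for an action of a group `G` on an `ℝ`-algebra `A`
by `ℝ`-algebra automorphisms. -/
def fixedSubalgebra (G : Type) [Group G] (A : Type) [Ring A] [Algebra ℝ A]
    (φ : G →* (A ≃ₐ[ℝ] A)) : Subalgebra ℝ A where
  carrier := {a | ∀ g : G, φ g a = a}
  mul_mem' := fun {a b} ha hb g => by rw [map_mul, ha g, hb g]
  add_mem' := fun {a b} ha hb g => by rw [map_add, ha g, hb g]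
  algebraMap_mem' := fun r g => (φ g).commutes r

/-- If `A` is a finite-dimensional simple `ℝ`-algebra and `G` a finite group acting on `A`
by `ℝ`-algebra automorphisms, then the fixed subalgebra `A^G` is semisimple, i.e.
isomorphic to a finite product of simple `ℝ`-algebras. -/
theorem fixedSubalgebra_semisimple
    (A : Type) [Ring A] [Algebra ℝ A] [FiniteDimensional ℝ A] [IsSimpleRing A]
    (G : Type) [Group G] [Finite G] (φ : G →* (A ≃ₐ[ℝ] A)) :
    ∃ (ι : Type) (_ : Fintype ι) (B : ι → Type) (_ : ∀ i, Ring (B i))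
      (_ : ∀ i, Algebra ℝ (B i)),
      (∀ i, IsSimpleRing (B i)) ∧
      Nonempty ((fixedSubalgebra G A φ) ≃ₐ[ℝ] ((i : ι) → B i)) := by
  classical
  haveI := Fintype.ofFinite G
  -- the trace form on A
  set T : A →ₗ[ℝ] ℝ := (LinearMap.trace ℝ A) ∘ₗ (LinearMap.mul ℝ A) with hT
  set B : A →ₗ[ℝ] A →ₗ[ℝ] ℝ := (LinearMap.mul ℝ A).compr₂ T with hB
  have hBapp : ∀ a b : A, B a b = LinearMap.trace ℝ A (LinearMap.mul ℝ A (a * b)) :=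
    fun a b => rfl
  have hmulmul : ∀ a b : A, LinearMap.mul ℝ A (a * b) =
      LinearMap.mul ℝ A a * LinearMap.mul ℝ A b := by
    intro a b; ext z; simp [mul_assoc]
  have hAsym : ∀ a b : A, B a b = B b a := by
    intro a b
    rw [hBapp, hBapp, hmulmul, hmulmul, LinearMap.trace_mul_comm]
  have hAassoc : ∀ a b c : A, B (a * b) c = B a (b * c) := by
    intro a b c
    rw [hBapp, hBapp, mul_assoc]
  have hpow : ∀ (x : A) (k : ℕ) (z : A), (LinearMap.mul ℝ A x ^ k) z = x ^ k * z := by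
    intro x k
    induction k with
    | zero => intro z; simp
    | succ k ih =>
        intro z
        rw [pow_succ', pow_succ']
        show (LinearMap.mul ℝ A x) ((LinearMap.mul ℝ A x ^ k) z) = (x * x ^ k) * z
        rw [ih, LinearMap.mul_apply', mul_assoc]
  have hAnil : ∀ x : A, IsNilpotent x → B x 1 = 0 := by
    intro x hx
    have h1 : B x 1 = LinearMap.trace ℝ A (LinearMap.mul ℝ A x) := by rw [hBapp, mul_one]
    have h2 : IsNilpotent (LinearMap.mul ℝ A x) := by
      obtain ⟨k, hk⟩ := hx
      refine ⟨k, ?_⟩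
      ext z
      rw [hpow, hk, zero_mul]
      simp
    rw [h1]
    exact (isNilpotent_trace_of_isNilpotent h2).eq_zero
  -- nondegeneracy on A via simplicity
  have hAnd : ∀ x : A, (∀ y, B x y = 0) → x = 0 := by
    intro x hx
    set Rad : TwoSidedIdeal A := TwoSidedIdeal.mk' {z | ∀ y, B z y = 0}
      (fun y => by rw [map_zero, LinearMap.zero_apply])
      (fun {a b} ha hb y => by rw [map_add, LinearMap.add_apply, ha y, hb y, add_zero])
      (fun {a} ha y => by rw [map_neg, LinearMap.neg_apply, ha y, neg_zero])
      (fun {a b} hb y => by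
        have h1 : B (a * b) y = B b (y * a) :=
          ((hAsym _ _).trans (hAassoc _ _ _).symm).trans (hAsym _ _)
        rw [h1, hb _])
      (fun {a b} ha y => by rw [hAassoc, ha _]) with hRad
    have hmem : ∀ z : A, z ∈ Rad ↔ ∀ y, B z y = 0 := fun z =>
      TwoSidedIdeal.mem_mk' _ _ _ _ _ _ z
    haveI hso := ‹IsSimpleRing A›.simple
    rcases hso.eq_bot_or_eq_top Rad with hbot | htop
    · have : x ∈ Rad := (hmem x).mpr hx
      rw [hbot, TwoSidedIdeal.mem_bot] at this
      exact this
    · exfalso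
      have h1 : (1 : A) ∈ Rad := by rw [htop]; trivial
      have h2 := (hmem 1).mp h1 1
      have h3 : LinearMap.mul ℝ A ((1 : A) * 1) = LinearMap.id := by ext z; simp
      rw [hBapp, h3, LinearMap.trace_id] at h2
      have h4 : (0 : ℕ) < finrank ℝ A := Module.finrank_pos
      rw [Nat.cast_eq_zero] at h2
      omega
  -- G-invariance of the trace form
  have hGinv : ∀ (g : G) (u v : A), B (φ g u) (φ g v) = B u v := by
    intro g u v
    have h1 : B (φ g u) (φ g v) = LinearMap.trace ℝ A (LinearMap.mul ℝ A (φ g (u * v))) := by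
      rw [hBapp, ← map_mul]
    have h2 : LinearMap.mul ℝ A (φ g (u * v)) =
        (φ g).toLinearEquiv.conj (LinearMap.mul ℝ A (u * v)) := by
      ext z
      simp only [LinearMap.mul_apply', LinearEquiv.conj_apply, LinearMap.comp_apply,
        LinearEquiv.coe_coe, AlgEquiv.toLinearEquiv_apply]
      have h3 : (φ g).toLinearEquiv.symm z = (φ g).symm z := rfl
      rw [h3]
      conv_rhs => rw [map_mul]
      congr 1
      exact ((φ g).apply_symm_apply z).symm
    rw [h1, h2, LinearMap.trace_conj', hBapp]
  -- the fixed subalgebra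
  set R : Subalgebra ℝ A := fixedSubalgebra G A φ with hR
  have hcard : (Fintype.card G : ℝ) ≠ 0 := Nat.cast_ne_zero.mpr Fintype.card_ne_zero
  letI BR : ↥R →ₗ[ℝ] ↥R →ₗ[ℝ] ℝ := LinearMap.mk₂ ℝ (fun x y => B x.1 y.1)
    (fun x x' y => by show B ((x : A) + x') y = _; rw [map_add, LinearMap.add_apply])
    (fun c x y => by show B (c • (x : A)) y = _; rw [map_smul, LinearMap.smul_apply])
    (fun x y y' => by show B _ ((y : A) + y') = _; rw [map_add])
    (fun c x y => by show B _ (c • (y : A)) = _; rw [map_smul])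
  have hBRapp : ∀ x y : ↥R, BR x y = B x.1 y.1 := fun x y => rfl
  have hsymR : ∀ x y : ↥R, BR x y = BR y x := fun x y => hAsym x.1 y.1
  have hassocR : ∀ x y z : ↥R, BR (x * y) z = BR x (y * z) := fun x y z =>
    hAassoc x.1 y.1 z.1
  have hnilR : ∀ x : ↥R, IsNilpotent x → BR x 1 = 0 := by
    intro x hx
    have h1 : IsNilpotent x.1 := hx.map R.val
    exact hAnil x.1 h1
  have hndR : ∀ x : ↥R, (∀ y, BR x y = 0) → x = 0 := by
    intro x hx
    have hxfix : ∀ g : G, φ g x.1 = x.1 := x.2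
    apply Subtype.ext
    show x.1 = 0
    apply hAnd
    intro a
    set p : A := (Fintype.card G : ℝ)⁻¹ • ∑ g : G, φ g a with hp
    have hpR : p ∈ R := by
      intro h
      rw [hp, map_smul]
      congr 1
      rw [map_sum]
      refine Fintype.sum_equiv (Equiv.mulLeft h) _ _ (fun g => ?_)
      show φ h (φ g a) = φ (h * g) a
      rw [map_mul]
      rfl
    have h1 : B x.1 p = 0 := hx ⟨p, hpR⟩
    have h2 : B x.1 p = B x.1 a := by
      have h3 : ∀ g : G, B x.1 (φ g a) = B x.1 a := fun g => by
        conv_lhs => rw [← hxfix g]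
        exact hGinv g x.1 a
      rw [hp, map_smul, map_sum, Finset.sum_congr rfl (fun g _ => h3 g), Finset.sum_const,
        Finset.card_univ, nsmul_eq_mul, smul_eq_mul, ← mul_assoc, inv_mul_cancel₀ hcard,
        one_mul]
    rw [← h2, h1]
  haveI : Nontrivial ↥R := ⟨⟨1, 0, fun h => one_ne_zero (α := A) (congrArg Subtype.val h)⟩⟩
  haveI : IsSemisimpleRing ↥R := isSemisimpleRing_of_form ↥R BR hsymR hassocR hnilR hndR
  obtain ⟨ι, fι, C, rC, aC, hsC, ⟨E⟩⟩ :=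
    decomp (finrank ℝ ↥R) ↥R BR hsymR hassocR hndR le_rfl
  exact ⟨ι, fι, C, rC, aC, hsC, ⟨E⟩⟩
end

section
/- Let A be a central simple algebra over a field k. The generalized Brauer–Severi variety X_n (of rank-n right ideals of A) has a k-rational point if and only if the index ind(A) divides n. -/
/-!
Write `A ≅ Mₘ(D)`. A right ideal of `Mₘ(D)` is the set of matrices whose columns lie in some
right `D`-subspace `W ⊆ Dᵐ`, so the `k`-dimensions of right ideals are the numbers `m r dim D`
with `r ≤ m`. As `D` is central, `K ⊗ D` is simple for every field extension `K` of `k`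
(minimal-support argument); for `K` algebraically closed it is a matrix algebra over `K`, so
`dim D = e²` with `e = ind A` and `deg A = m e`. Hence a right ideal of dimension `n m e` exists
iff `n = r e` for some `r ≤ m`, i.e. iff `e ∣ n`.
-/

universe u

open Module MulOpposite TensorProduct

theorem Submodule.exists_finrank_eq {K V : Type*} [DivisionRing K] [AddCommGroup V] [Module K V]
    [FiniteDimensional K V] {r : ℕ} (hr : r ≤ finrank K V) :
    ∃ W : Submodule K V, finrank K W = r := by
  let b := Module.finBasis K V
  refine ⟨Submodule.span K (Set.range (b ∘ Fin.castLE hr)), ?_⟩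
  rw [finrank_span_eq_card (b.linearIndependent.comp _ (Fin.castLE_injective hr)), Fintype.card_fin]

theorem Matrix.updateCol_add {m n α : Type*} [DecidableEq n] [Add α] (A B : Matrix m n α) (j : n)
    (v w : m → α) : (A + B).updateCol j (v + w) = A.updateCol j v + B.updateCol j w := by
  ext i l
  by_cases h : l = j <;> simp [h]

theorem Matrix.col_mul {l m n R : Type*} [Fintype m] [Ring R] (X : Matrix l m R)
    (Y : Matrix m n R) (j : n) : (X * Y).col j = ∑ p, op (Y p j) • X.col p :=
  mulVec_eq_sum (Y.col j) X

theorem Submodule.mul_mem_of_mulOpposite {A : Type*} [Ring A] {I : Submodule Aᵐᵒᵖ A} {x : A}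
    (hx : x ∈ I) (y : A) : x * y ∈ I := by
  simpa only [smul_eq_mul_unop, unop_op] using I.smul_mem (op y) hx

namespace Matrix

variable {ι R : Type*} [Fintype ι] [DecidableEq ι] [Ring R]

theorem updateCol_zero_mul_single (v : ι → R) (j : ι) (d : R) :
    updateCol 0 j v * single j j d = updateCol 0 j (op d • v) := by
  rw [mul_single_eq_updateCol_zero]
  congr 2
  exact funext fun _ => updateCol_self

theorem mul_single_one_eq_updateCol_zero (X : Matrix ι ι R) (i j : ι) :
    X * single i j 1 = updateCol 0 j (X.col i) := by
  rw [mul_single_eq_updateCol_zero, op_one, one_smul]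

theorem eq_sum_updateCol_zero_col (X : Matrix ι ι R) : X = ∑ j, updateCol 0 j (X.col j) := by
  ext i l
  simp [sum_apply, updateCol_apply]

def rightIdealOfCols (W : Submodule Rᵐᵒᵖ (ι → R)) :
    Submodule (Matrix ι ι R)ᵐᵒᵖ (Matrix ι ι R) where
  carrier := {X | ∀ j, X.col j ∈ W}
  add_mem' hX hY j := W.add_mem (hX j) (hY j)
  zero_mem' _ := W.zero_mem
  smul_mem' Y X hX j := by
    rw [smul_eq_mul_unop, col_mul]
    exact W.sum_mem fun p _ => W.smul_mem _ (hX p)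

def colSpace (J : Submodule (Matrix ι ι R)ᵐᵒᵖ (Matrix ι ι R)) : Submodule Rᵐᵒᵖ (ι → R) where
  carrier := {v | ∀ j, updateCol 0 j v ∈ J}
  add_mem' hv hw j := by
    simpa only [← updateCol_add, add_zero] using J.add_mem (hv j) (hw j)
  zero_mem' j := by simp
  smul_mem' d v hv j := by
    simpa only [op_unop, updateCol_zero_mul_single] using
      Submodule.mul_mem_of_mulOpposite (hv j) (single j j d.unop)

theorem rightIdealOfCols_colSpace (J : Submodule (Matrix ι ι R)ᵐᵒᵖ (Matrix ι ι R)) :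
    rightIdealOfCols (colSpace J) = J := by
  ext X
  refine ⟨fun hX => ?_, fun hX i j => ?_⟩
  · rw [eq_sum_updateCol_zero_col X]
    exact J.sum_mem fun j _ => hX j j
  · rw [← mul_single_one_eq_updateCol_zero]
    exact Submodule.mul_mem_of_mulOpposite hX _

variable {k : Type*} [Field k] [Algebra k R]

def rightIdealOfColsEquiv (W : Submodule Rᵐᵒᵖ (ι → R)) :
    (rightIdealOfCols W).restrictScalars k ≃ₗ[k] (ι → W.restrictScalars k) where
  toFun X j := ⟨X.1.col j, X.2 j⟩
  invFun f := ⟨of fun i j => (f j).1 i, fun j => (f j).2⟩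
  map_add' _ _ := rfl
  map_smul' _ _ := rfl
  left_inv _ := rfl
  right_inv _ := rfl

theorem finrank_rightIdealOfCols [FiniteDimensional k R] (W : Submodule Rᵐᵒᵖ (ι → R)) :
    finrank k ((rightIdealOfCols W).restrictScalars k) = Fintype.card ι * finrank k W := by
  rw [(rightIdealOfColsEquiv W).finrank_eq, finrank_pi_fintype, Finset.sum_const,
    Finset.card_univ, smul_eq_mul]
  rfl

end Matrix

section

variable {k D : Type*} [Field k] [DivisionRing D] [Algebra k D]

theorem finrank_mulOpposite_pi (ι : Type*) [Fintype ι] : finrank Dᵐᵒᵖ (ι → D) = Fintype.card ι := by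
  rw [(LinearEquiv.piCongrRight fun _ ↦ opLinearEquiv Dᵐᵒᵖ).finrank_eq,
    finrank_fintype_fun_eq_card]

instance (ι : Type*) [Finite ι] : FiniteDimensional Dᵐᵒᵖ (ι → D) :=
  Module.Finite.equiv (LinearEquiv.piCongrRight fun _ ↦ opLinearEquiv Dᵐᵒᵖ).symm

theorem finrank_eq_finrank_mul_finrank_mulOpposite {V : Type*} [AddCommGroup V] [Module k V]
    [Module Dᵐᵒᵖ V] [IsScalarTower k Dᵐᵒᵖ V] [FiniteDimensional k D] [Module.Free Dᵐᵒᵖ V] :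
    finrank k V = finrank k D * finrank Dᵐᵒᵖ V := by
  rw [← finrank_mul_finrank k Dᵐᵒᵖ V, (opLinearEquiv k : D ≃ₗ[k] Dᵐᵒᵖ).finrank_eq]

end

/-- `X_n(A)` has a rational point iff `n * deg A ∈ rightIdealFinranks k A`. -/
def rightIdealFinranks (k A : Type*) [Field k] [Ring A] [Algebra k A] : Set ℕ :=
  {N | ∃ I : Submodule Aᵐᵒᵖ A, finrank k (I.restrictScalars k) = N}

theorem rightIdealFinranks_subset_of_algEquiv {k A B : Type*} [Field k] [Ring A] [Ring B]
    [Algebra k A] [Algebra k B] (ψ : A ≃ₐ[k] B) :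
    rightIdealFinranks k A ⊆ rightIdealFinranks k B := by
  rintro _ ⟨I, rfl⟩
  let J : Submodule Bᵐᵒᵖ B :=
    { (I.restrictScalars k).map ψ.toLinearMap with
      smul_mem' := by
        rintro c _ ⟨x, hx, rfl⟩
        refine ⟨x * ψ.symm c.unop, ?_, ?_⟩
        · exact Submodule.mul_mem_of_mulOpposite (I := I) hx _
        · simp [smul_eq_mul_unop] }
  exact ⟨J, ((I.restrictScalars k).equivMapOfInjective _ ψ.injective).finrank_eq.symm⟩

theorem rightIdealFinranks_congr {k A B : Type*} [Field k] [Ring A] [Ring B]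
    [Algebra k A] [Algebra k B] (ψ : A ≃ₐ[k] B) : rightIdealFinranks k A = rightIdealFinranks k B :=
  (rightIdealFinranks_subset_of_algEquiv ψ).antisymm (rightIdealFinranks_subset_of_algEquiv ψ.symm)

theorem rightIdealFinranks_matrix (k D ι : Type*) [Field k] [DivisionRing D] [Algebra k D]
    [FiniteDimensional k D] [Fintype ι] [DecidableEq ι] :
    rightIdealFinranks k (Matrix ι ι D) =
      {N | ∃ r ≤ Fintype.card ι, N = Fintype.card ι * (finrank k D * r)} := by
  ext N
  constructor
  · rintro ⟨J, rfl⟩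
    refine ⟨finrank Dᵐᵒᵖ (Matrix.colSpace J), ?_, ?_⟩
    · exact finrank_mulOpposite_pi (D := D) ι ▸ Submodule.finrank_le _
    · conv_lhs => rw [← Matrix.rightIdealOfCols_colSpace J]
      rw [Matrix.finrank_rightIdealOfCols, finrank_eq_finrank_mul_finrank_mulOpposite (D := D)]
  · rintro ⟨r, hr, rfl⟩
    obtain ⟨W, hW⟩ := Submodule.exists_finrank_eq (finrank_mulOpposite_pi (D := D) ι ▸ hr)
    exact ⟨Matrix.rightIdealOfCols W, by
      rw [Matrix.finrank_rightIdealOfCols, finrank_eq_finrank_mul_finrank_mulOpposite (D := D), hW]⟩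

section

variable {k K D ι : Type*} [Field k] [Ring K] [Algebra k K] [Ring D] [Algebra k D]
  [DecidableEq ι] (b : Basis ι k K)

theorem TensorProduct.equivFinsuppOfBasisLeft_tmul_one_mul (x : K ⊗[k] D) (d : D) (i : ι) :
    equivFinsuppOfBasisLeft b ((1 ⊗ₜ d) * x) i = d * equivFinsuppOfBasisLeft b x i := by
  induction x using TensorProduct.induction_on with
  | zero => simp
  | tmul t e =>
    simp only [Algebra.TensorProduct.tmul_mul_tmul, one_mul,
      equivFinsuppOfBasisLeft_apply_tmul_apply, mul_smul_comm]
  | add x y hx hy => simp only [mul_add, map_add, Finsupp.add_apply, hx, hy]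

theorem TensorProduct.equivFinsuppOfBasisLeft_mul_one_tmul (x : K ⊗[k] D) (d : D) (i : ι) :
    equivFinsuppOfBasisLeft b (x * (1 ⊗ₜ d)) i = equivFinsuppOfBasisLeft b x i * d := by
  induction x using TensorProduct.induction_on with
  | zero => simp
  | tmul t e =>
    simp only [Algebra.TensorProduct.tmul_mul_tmul, mul_one,
      equivFinsuppOfBasisLeft_apply_tmul_apply, smul_mul_assoc]
  | add x y hx hy => simp only [add_mul, map_add, Finsupp.add_apply, hx, hy]

theorem TensorProduct.exists_eq_tmul_one_of_equivFinsuppOfBasisLeft_mem_range {x : K ⊗[k] D}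
    (hx : ∀ i, equivFinsuppOfBasisLeft b x i ∈ Set.range (algebraMap k D)) :
    ∃ u : K, x = u ⊗ₜ 1 := by
  choose t ht using hx
  refine ⟨(equivFinsuppOfBasisLeft b x).sum fun i _ => t i • b i, ?_⟩
  conv_lhs => rw [← (equivFinsuppOfBasisLeft b).symm_apply_apply x]
  rw [equivFinsuppOfBasisLeft_symm_apply, Finsupp.sum, Finsupp.sum, sum_tmul]
  refine Finset.sum_congr rfl fun i _ => ?_
  rw [← ht i, Algebra.algebraMap_eq_smul_one, tmul_smul, smul_tmul']

end

section

variable {k K D ι : Type*} [Field k] [Ring K] [Algebra k K] [DivisionRing D] [Algebra k D]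
  [DecidableEq ι] (b : Basis ι k K)

local notation "c" => equivFinsuppOfBasisLeft b

/-- The commutator with `1 ⊗ d` kills the normalised coordinate, so it has strictly smaller
support and vanishes by minimality. -/
theorem TensorProduct.commute_equivFinsuppOfBasisLeft_of_minimal {I : TwoSidedIdeal (K ⊗[k] D)}
    {x : K ⊗[k] D} {i₀ : ι} (hxI : x ∈ I) (hx₁ : c x i₀ = 1)
    (hmin : ∀ y ∈ I, y ≠ 0 → (c x).support.card ≤ (c y).support.card) (d : D) (i : ι) :
    Commute d (c x i) := by
  set y := (1 ⊗ₜ d) * x - x * (1 ⊗ₜ d)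
  have hcy : ∀ j, c y j = d * c x j - c x j * d := fun j => by
    rw [map_sub, Finsupp.sub_apply, equivFinsuppOfBasisLeft_tmul_one_mul,
      equivFinsuppOfBasisLeft_mul_one_tmul]
  have hsupp : (c y).support ⊂ (c x).support := by
    refine (Finset.ssubset_iff_of_subset fun j hj => ?_).2
      ⟨i₀, by simp [hx₁], by simp [hcy, hx₁]⟩
    contrapose! hj
    simp_all
  have hy : y = 0 := by
    by_contra hy
    exact (Finset.card_lt_card hsupp).not_ge
      (hmin y (I.sub_mem (I.mul_mem_left _ _ hxI) (I.mul_mem_right _ _ hxI)) hy)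
  show d * c x i = c x i * d
  simpa [hcy, sub_eq_zero] using congrArg (c · i) hy

theorem TensorProduct.exists_minimal_mem_equivFinsuppOfBasisLeft_eq_one
    {I : TwoSidedIdeal (K ⊗[k] D)} (hI : I ≠ ⊥) :
    ∃ x ∈ I, ∃ i₀, c x i₀ = 1 ∧ ∀ y ∈ I, y ≠ 0 → (c x).support.card ≤ (c y).support.card := by
  obtain ⟨x₀, hx₀I, hx₀⟩ : ∃ x ∈ I, x ≠ 0 := by
    by_contra! h
    exact hI (TwoSidedIdeal.ext fun x => ⟨fun hx => (TwoSidedIdeal.mem_bot _).2 (h x hx),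
      fun hx => (TwoSidedIdeal.mem_bot _).1 hx ▸ I.zero_mem⟩)
  obtain ⟨x, ⟨hxI, hx0⟩, hmin⟩ := (measure fun y => (c y).support.card).wf.has_min
    {y | y ∈ I ∧ y ≠ 0} ⟨x₀, hx₀I, hx₀⟩
  obtain ⟨i₀, hi₀⟩ := Finsupp.support_nonempty_iff.2 ((c).map_ne_zero_iff.2 hx0)
  have hx₀ : c x i₀ ≠ 0 := Finsupp.mem_support_iff.1 hi₀
  have hsupp : (c (x * (1 ⊗ₜ (c x i₀)⁻¹))).support = (c x).support := by
    ext i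
    simp [equivFinsuppOfBasisLeft_mul_one_tmul, hx₀]
  refine ⟨x * (1 ⊗ₜ (c x i₀)⁻¹), I.mul_mem_right _ _ hxI, i₀, ?_, fun y hyI hy0 => ?_⟩
  · rw [equivFinsuppOfBasisLeft_mul_one_tmul, mul_inv_cancel₀ hx₀]
  · rw [hsupp]
    exact not_lt.1 (hmin y ⟨hyI, hy0⟩)

end

theorem TensorProduct.exists_ne_zero_tmul_one_mem {k K D : Type*} [Field k] [Ring K] [Algebra k K]
    [DivisionRing D] [Algebra k D] [Algebra.IsCentral k D] {I : TwoSidedIdeal (K ⊗[k] D)}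
    (hI : I ≠ ⊥) : ∃ u : K, u ≠ 0 ∧ u ⊗ₜ (1 : D) ∈ I := by
  classical
  let b := Module.Free.chooseBasis k K
  obtain ⟨x, hxI, i₀, hx₁, hmin⟩ := exists_minimal_mem_equivFinsuppOfBasisLeft_eq_one b hI
  have hcentral : ∀ i, equivFinsuppOfBasisLeft b x i ∈ Set.range (algebraMap k D) := fun i =>
    ((Algebra.IsCentral.mem_center_iff k).1 (Subalgebra.mem_center_iff.2 fun d =>
      (commute_equivFinsuppOfBasisLeft_of_minimal b hxI hx₁ hmin d i).eq)).imp fun _ => Eq.symm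
  obtain ⟨u, rfl⟩ := exists_eq_tmul_one_of_equivFinsuppOfBasisLeft_mem_range b hcentral
  refine ⟨u, fun hu => ?_, hxI⟩
  simp [hu] at hx₁

theorem TensorProduct.isSimpleRing_of_isCentral (k K D : Type*) [Field k] [Field K] [Algebra k K]
    [DivisionRing D] [Algebra k D] [Algebra.IsCentral k D] : IsSimpleRing (K ⊗[k] D) := by
  refine ⟨⟨fun I => or_iff_not_imp_left.2 fun hI => ?_⟩⟩
  obtain ⟨u, hu, huI⟩ := exists_ne_zero_tmul_one_mem hI
  have := I.mul_mem_left (u⁻¹ ⊗ₜ 1) _ huI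
  rw [Algebra.TensorProduct.tmul_mul_tmul, inv_mul_cancel₀ hu, one_mul,
    ← Algebra.TensorProduct.one_def] at this
  exact (TwoSidedIdeal.one_mem_iff I).1 this

theorem Algebra.IsCentral.isSquare_finrank (k D : Type*) [Field k] [DivisionRing D] [Algebra k D]
    [FiniteDimensional k D] [Algebra.IsCentral k D] : IsSquare (finrank k D) := by
  let K := AlgebraicClosure k
  have := TensorProduct.isSimpleRing_of_isCentral k K D
  obtain ⟨n, _, ⟨e⟩⟩ := IsSimpleRing.exists_algEquiv_matrix_of_isAlgClosed K (K ⊗[k] D)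
  refine ⟨n, ?_⟩
  rw [← finrank_baseChange (R := K), e.toLinearEquiv.finrank_eq, finrank_matrix, Fintype.card_fin,
    finrank_self, mul_one]

theorem Module.Finite.of_matrix (R α ι : Type*) [Semiring R] [AddCommMonoid α] [Module R α]
    [Nonempty ι] [Module.Finite R (Matrix ι ι α)] : Module.Finite R α :=
  let i := Classical.arbitrary ι
  .of_surjective (Matrix.entryLinearMap R α i i) fun d => ⟨.of fun _ _ => d, rfl⟩

theorem Algebra.IsCentral.of_matrix (k D ι : Type u) [Field k] [Ring D] [Algebra k D] [Fintype ι]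
    [DecidableEq ι] [Nonempty ι] [Algebra.IsCentral k (Matrix ι ι D)] : Algebra.IsCentral k D :=
  have := Algebra.IsCentral.of_algEquiv k _ _ (matrixEquivTensor ι k D)
  .left_of_tensor_of_field k D (Matrix ι ι k)

theorem Nat.exists_le_mul_eq_iff_dvd {m e n : ℕ} (hm : 0 < m) (he : 0 < e) (hn : n ≤ m * e) :
    (∃ r ≤ m, n * (m * e) = m * (e * e * r)) ↔ e ∣ n := by
  constructor
  · rintro ⟨r, -, h⟩
    exact ⟨r, Nat.eq_of_mul_eq_mul_right (Nat.mul_pos hm he) (by rw [h]; ring)⟩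
  · rintro ⟨t, rfl⟩
    exact ⟨t, Nat.le_of_mul_le_mul_left (by linarith : e * t ≤ e * m) he, by ring⟩

theorem generalized_brauer_severi_has_point_iff_index_dvd_general
    (k : Type) [Field k] (A : Type) [Ring A] [Algebra k A] [FiniteDimensional k A]
    [Algebra.IsCentral k A]
    (D : Type) [DivisionRing D] [Algebra k D]
    (m : ℕ) (hm : 0 < m) (hA : Nonempty (A ≃ₐ[k] Matrix (Fin m) (Fin m) D))
    (n : ℕ) (hnd : n ≤ Nat.sqrt (Module.finrank k A)) :
    (∃ I : Submodule Aᵐᵒᵖ A,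
        Module.finrank k (I.restrictScalars k) = n * Nat.sqrt (Module.finrank k A)) ↔
    Nat.sqrt (Module.finrank k D) ∣ n := by
  obtain ⟨φ⟩ := hA
  have : Nonempty (Fin m) := ⟨⟨0, hm⟩⟩
  have : Algebra.IsCentral k (Matrix (Fin m) (Fin m) D) := .of_algEquiv k A _ φ
  have : Algebra.IsCentral k D := .of_matrix k D (Fin m)
  have : FiniteDimensional k (Matrix (Fin m) (Fin m) D) := .equiv φ.toLinearEquiv
  have : FiniteDimensional k D := .of_matrix k D (Fin m)
  obtain ⟨e, he⟩ := Algebra.IsCentral.isSquare_finrank k D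
  have he0 : 0 < e :=
    Nat.pos_of_ne_zero fun h => (finrank_pos (R := k) (M := D)).ne' (by rw [he, h])
  have hdeg : Nat.sqrt (finrank k A) = m * e := by
    rw [φ.toLinearEquiv.finrank_eq, finrank_matrix, Fintype.card_fin, he,
      show m * m * (e * e) = m * e * (m * e) by ring, Nat.sqrt_eq]
  rw [hdeg] at hnd ⊢
  change n * (m * e) ∈ rightIdealFinranks k A ↔ _
  rw [rightIdealFinranks_congr φ, rightIdealFinranks_matrix, Fintype.card_fin, he, Nat.sqrt_eq]
  exact Nat.exists_le_mul_eq_iff_dvd hm he0 hnd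

/-- Let `A` be a central simple algebra over a field `k` of degree `d = √dimₖ A`, and let
`D` be the division algebra with `A ≅ Mₘ(D)` (Wedderburn), so that `ind(A) = √dimₖ D`.
For `1 ≤ n ≤ d`, the generalized Brauer–Severi variety `X_n` — whose `k`-points are the
right ideals of `A` of `k`-dimension `n · d` — has a `k`-rational point if and only if
`ind(A)` divides `n` (Knus–Merkurjev–Rost, Proposition 1.17).
(Right ideals of `A` are the `Aᵐᵒᵖ`-submodules of `A`.) -/
theorem generalized_brauer_severi_has_point_iff_index_dvd
    (k : Type) [Field k] (A : Type) [Ring A] [Algebra k A] [FiniteDimensional k A]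
    [Algebra.IsCentral k A] [IsSimpleRing A]
    (D : Type) [DivisionRing D] [Algebra k D]
    (m : ℕ) (hm : 0 < m) (hA : Nonempty (A ≃ₐ[k] Matrix (Fin m) (Fin m) D))
    (n : ℕ) (hn : 1 ≤ n) (hnd : n ≤ Nat.sqrt (Module.finrank k A)) :
    (∃ I : Submodule Aᵐᵒᵖ A,
        Module.finrank k (I.restrictScalars k) = n * Nat.sqrt (Module.finrank k A)) ↔
    Nat.sqrt (Module.finrank k D) ∣ n :=
  generalized_brauer_severi_has_point_iff_index_dvd_general k A D m hm hA n hnd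
end
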